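/- arXiv:2007.03585 — 6 statements merged into one kernel-verified Lean document; each statement's English description precedes it below -/
import Mathlib

section
/- Let v : ℝ → ℝ be continuously differentiable with v(k) > 0 for all k, and suppose the map f_{1/2}(k) := k / v(k) has strictly positive derivative everywhere. Then there exists a unique continuous strictly positive function h : ℝ → ℝ such that v(k) = k / (∫₀ᵏ (1/h(y)) dy) for all k ≠ 0, and v(0) = h(0). In other words, v is the harmonic mean of h over [0,k]. -/
/-!
Put `f k = k / v k`. For positive `h`, the representation says exactly that `∫₀ᵏ 1/h = f k`
for every `k`, and by the fundamental theorem of calculus this holds for a continuous `h` iff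
`1/h = f'`. Hence `h = 1/f'` is the unique candidate; it is continuous and positive because
`f` is `C¹` with `f' > 0`, and `f'(0) = 1/v(0)`.
-/

open intervalIntegral

theorem forall_integral_eq_sub_iff {F g : ℝ → ℝ} (hF : ContDiff ℝ 1 F) (hg : Continuous g)
    (a : ℝ) : (∀ k, ∫ y in a..k, g y = F k - F a) ↔ g = deriv F := by
  constructor
  · intro hint
    have hprim : (fun k => ∫ y in a..k, g y) = fun k => F k - F a := funext hint
    funext k
    rw [← hg.deriv_integral g a k, hprim, deriv_sub_const]
  · rintro rfl k
    exact integral_deriv_eq_sub (fun x _ => (hF.differentiable one_ne_zero).differentiableAt)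
      (hg.intervalIntegrable a k)

theorem eq_div_iff_eq_div_of_ne_zero {K : Type*} [Field K] {a b c : K}
    (ha : a ≠ 0) (hb : b ≠ 0) :
    b = a / c ↔ c = a / b := by
  constructor <;> rintro rfl
  · rw [div_div_cancel₀ (by rintro rfl; simp at hb)]
  · rw [div_div_cancel₀ ha]

theorem forall_eq_div_integral_iff {v g : ℝ → ℝ} (hv : ∀ k, v k ≠ 0) :
    (∀ k ≠ 0, v k = k / ∫ y in (0:ℝ)..k, g y) ↔ ∀ k, ∫ y in (0:ℝ)..k, g y = k / v k := by
  refine forall_congr' fun k => ?_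
  rcases eq_or_ne k 0 with rfl | hk
  · simp
  · simp only [ne_eq, hk, not_false_eq_true, forall_const]
    exact eq_div_iff_eq_div_of_ne_zero hk (hv k)

theorem deriv_id_div_zero {𝕜 : Type*} [NontriviallyNormedField 𝕜] {v : 𝕜 → 𝕜}
    (hv : DifferentiableAt 𝕜 v 0) (hv0 : v 0 ≠ 0) :
    deriv (fun x => x / v x) 0 = (v 0)⁻¹ := by
  have hd : HasDerivAt (fun x => x / v x) ((1 * v 0 - 0 * deriv v 0) / v 0 ^ 2) 0 :=
    (hasDerivAt_id' 0).div hv.hasDerivAt hv0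
  rw [hd.deriv]
  field_simp
  ring

theorem harmonic_mean_representation
    (v : ℝ → ℝ) (hv : ContDiff ℝ 1 v) (hvpos : ∀ k, 0 < v k)
    (hderiv : ∀ k, 0 < deriv (fun x => x / v x) k) :
    ∃! h : ℝ → ℝ, Continuous h ∧ (∀ k, 0 < h k) ∧
      (∀ k ≠ 0, v k = k / ∫ y in (0:ℝ)..k, (h y)⁻¹) ∧ v 0 = h 0 := by
  set f : ℝ → ℝ := fun x => x / v x
  have hvne : ∀ k, v k ≠ 0 := fun k => (hvpos k).ne'
  have hf : ContDiff ℝ 1 f := contDiff_id.div hv hvne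
  have hf' : Continuous (deriv f) := hf.continuous_deriv le_rfl
  have hrep : ∀ h : ℝ → ℝ, Continuous h → (∀ k, 0 < h k) →
      ((∀ k ≠ 0, v k = k / ∫ y in (0:ℝ)..k, (h y)⁻¹) ↔ (fun y => (h y)⁻¹) = deriv f) := by
    intro h hc hpos
    rw [forall_eq_div_integral_iff hvne,
      ← forall_integral_eq_sub_iff (g := fun y => (h y)⁻¹) hf (hc.inv₀ fun k => (hpos k).ne') 0]
    simp [f]
  refine ⟨fun k => (deriv f k)⁻¹, ⟨hf'.inv₀ fun k => (hderiv k).ne',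
    fun k => inv_pos.2 (hderiv k), ?_, ?_⟩, ?_⟩
  · exact (hrep _ (hf'.inv₀ fun k => (hderiv k).ne') fun k => inv_pos.2 (hderiv k)).2
      (funext fun y => inv_inv _)
  · simp only [deriv_id_div_zero (hv.differentiable one_ne_zero 0) (hvne 0), f, inv_inv]
  · rintro h ⟨hc, hpos, hh, -⟩
    funext k
    rw [← (hrep h hc hpos).1 hh, inv_inv]
end

section
/- Let h : ℝ → ℝ be continuous and strictly positive, and let v be its harmonic mean: v(k) = k / (∫₀ᵏ dy/h(y)) for k ≠ 0 and v(0) = h(0). If h is differentiable at 0, then v is differentiable at 0 and v'(0) = (1/2) h'(0) (the '1/2-skew rule'). -/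
/-!
Write `M f k = (∫₀ᵏ f) / k` for the running mean of `f`, with `M f 0 = f 0`, so that
`v = (M (1/h))⁻¹`. If `f` is differentiable at `0`, then `f(y) = f 0 + f'(0) y + o(y)` integrates to
`M f k = f 0 + f'(0) k / 2 + o(k)`, i.e. `(M f)'(0) = f'(0) / 2`; the chain rule for `x ↦ x⁻¹` then
gives `v'(0) = -((1/h)'(0) / 2) h(0)² = h'(0) / 2`.
-/

open Filter Topology

noncomputable def runningMean (f : ℝ → ℝ) (k : ℝ) : ℝ :=
  if k = 0 then f 0 else (∫ y in (0:ℝ)..k, f y) / k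

section RunningMean

variable {f : ℝ → ℝ} {f' : ℝ}

theorem runningMean_zero (f : ℝ → ℝ) : runningMean f 0 = f 0 := if_pos rfl

theorem runningMean_of_ne_zero (f : ℝ → ℝ) {k : ℝ} (hk : k ≠ 0) :
    runningMean f k = (∫ y in (0:ℝ)..k, f y) / k := if_neg hk

/-- L'Hôpital's rule: numerator and denominator have derivatives `f k - f 0` and `2 k`. -/
theorem tendsto_integral_sub_div_sq (hf : Continuous f) (hd : HasDerivAt f f' 0) :
    Tendsto (fun k => (∫ y in (0:ℝ)..k, (f y - f 0)) / k ^ 2) (𝓝[≠] 0) (𝓝 (f' / 2)) := by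
  have hcont : Continuous fun y => f y - f 0 := hf.sub continuous_const
  have hslope : Tendsto (fun k => (f k - f 0) / (2 * k)) (𝓝[≠] 0) (𝓝 (f' / 2)) := by
    refine (hd.tendsto_slope_zero.div_const 2).congr fun k => ?_
    simp only [zero_add, smul_eq_mul]
    ring
  refine HasDerivAt.lhopital_zero_nhdsNE (f' := fun k => f k - f 0) (g' := fun k => 2 * k)
    (.of_forall fun k => (hcont.integral_hasStrictDerivAt 0 k).hasDerivAt)
    (.of_forall fun k => by simpa using hasDerivAt_pow 2 k) ?_ ?_ ?_ hslope
  · filter_upwards [self_mem_nhdsWithin] with k hk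
    exact mul_ne_zero two_ne_zero hk
  · refine tendsto_nhdsWithin_of_tendsto_nhds ?_
    simpa using (hcont.integral_hasStrictDerivAt 0 0).hasDerivAt.continuousAt.tendsto
  · exact tendsto_nhdsWithin_of_tendsto_nhds (by simpa using (continuous_pow 2).tendsto (0:ℝ))

theorem hasDerivAt_runningMean_zero (hf : Continuous f) (hd : HasDerivAt f f' 0) :
    HasDerivAt (runningMean f) (f' / 2) 0 := by
  rw [hasDerivAt_iff_tendsto_slope]
  refine (tendsto_integral_sub_div_sq hf hd).congr' ?_
  filter_upwards [self_mem_nhdsWithin] with k (hk : k ≠ 0)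
  rw [slope_def_field, runningMean_of_ne_zero f hk, runningMean_zero,
    intervalIntegral.integral_sub (hf.intervalIntegrable 0 k) intervalIntegrable_const,
    intervalIntegral.integral_const, smul_eq_mul]
  field_simp
  ring

end RunningMean

theorem one_half_skew_rule
    (h : ℝ → ℝ) (hh : Continuous h) (hpos : ∀ k, 0 < h k)
    (h' : ℝ) (hdiff : HasDerivAt h h' 0)
    (v : ℝ → ℝ)
    (hv0 : v 0 = h 0)
    (hvk : ∀ k ≠ 0, v k = k / ∫ y in (0:ℝ)..k, (h y)⁻¹) :
    HasDerivAt v (h' / 2) 0 := by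
  have hne : ∀ y, h y ≠ 0 := fun y => (hpos y).ne'
  have hv : v = fun k => (runningMean (fun y => (h y)⁻¹) k)⁻¹ := by
    funext k
    rcases eq_or_ne k 0 with rfl | hk
    · rw [runningMean_zero, hv0, inv_inv]
    · rw [runningMean_of_ne_zero _ hk, hvk k hk, inv_div]
  have hmean : HasDerivAt (runningMean fun y => (h y)⁻¹) (-h' / h 0 ^ 2 / 2) 0 :=
    hasDerivAt_runningMean_zero (hh.inv₀ hne) (hdiff.inv (hne 0))
  rw [hv]
  refine (hmean.inv (by rw [runningMean_zero]; exact inv_ne_zero (hne 0))).congr_deriv ?_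
  rw [runningMean_zero]
  field_simp [hne 0]
end

section
/- Let v : ℝ → ℝ be continuous with v > 0, define f₀(k) = k/v(k) + v(k)/2 and f₁(k) = k/v(k) − v(k)/2, and suppose f₀ and f₁ are strictly increasing and liminf_{k→∞} f₁(k) = ∞. Then for every p ∈ (0,1], the function f_p := p·f₁ + (1−p)·f₀ is a strictly increasing bijection from ℝ onto ℝ. -/
/-!
Since `f₀ = f₁ + v ≥ f₁`, the combination `f_p` lies above `f₁` and so tends to `+∞` at `+∞`.
At `-∞` the AM–GM inequality `-k / v + v / 2 ≥ √(-2k)` forces `f₁ → -∞` whatever `v > 0` is,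
while `f₀` stays below `f₀ 0` there, so `f_p → -∞` as well. A continuous strictly increasing
function with these limits is a bijection of `ℝ`.
-/

open Filter

lemma div_sub_half_le_neg_sqrt {k v : ℝ} (hk : k ≤ 0) (hv : 0 < v) :
    k / v - v / 2 ≤ -√(-2 * k) := by
  have hs : √(-2 * k) ^ 2 = -2 * k := Real.sq_sqrt (by linarith)
  rw [div_sub' hv.ne', div_le_iff₀ hv]
  nlinarith [sq_nonneg (v - √(-2 * k))]

lemma tendsto_div_sub_half_atBot {v : ℝ → ℝ} (hv : ∀ k, 0 < v k) :
    Tendsto (fun k => k / v k - v k / 2) atBot atBot := by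
  have hsqrt : Tendsto (fun k : ℝ => -√(-2 * k)) atBot atBot :=
    tendsto_neg_atTop_atBot.comp <| Real.tendsto_sqrt_atTop.comp <|
      tendsto_id.const_mul_atBot_of_neg (by norm_num)
  refine tendsto_atBot_mono' _ ?_ hsqrt
  filter_upwards [eventually_le_atBot 0] with k hk using div_sub_half_le_neg_sqrt hk (hv k)

theorem f_p_bijective
    (v : ℝ → ℝ) (hv : Continuous v) (hvpos : ∀ k, 0 < v k)
    (f₀ f₁ : ℝ → ℝ)
    (hf₀ : ∀ k, f₀ k = k / v k + v k / 2)
    (hf₁ : ∀ k, f₁ k = k / v k - v k / 2)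
    (hmono₀ : StrictMono f₀) (hmono₁ : StrictMono f₁)
    (hlim : Filter.Tendsto f₁ Filter.atTop Filter.atTop) :
    ∀ p ∈ Set.Ioc (0:ℝ) 1,
      StrictMono (fun k => p * f₁ k + (1 - p) * f₀ k) ∧
      Function.Bijective (fun k => p * f₁ k + (1 - p) * f₀ k) := by
  rintro p ⟨hp0, hp1⟩
  have hmono : StrictMono fun k => p * f₁ k + (1 - p) * f₀ k :=
    (hmono₁.const_mul hp0).add_monotone (hmono₀.monotone.const_mul (sub_nonneg.2 hp1))
  refine ⟨hmono, hmono.injective, ?_⟩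
  have hcont : Continuous fun k => p * f₁ k + (1 - p) * f₀ k := by
    simp only [hf₀, hf₁]
    fun_prop (disch := exact fun k => (hvpos k).ne')
  have htop : Tendsto (fun k => p * f₁ k + (1 - p) * f₀ k) atTop atTop := by
    refine tendsto_atTop_mono (fun k => ?_) hlim
    have hf₁_le_f₀ : f₁ k ≤ f₀ k := by rw [hf₀, hf₁]; linarith [hvpos k]
    nlinarith
  have hbot : Tendsto (fun k => p * f₁ k + (1 - p) * f₀ k) atBot atBot := by
    have hf₁_bot : Tendsto f₁ atBot atBot := by
      simpa only [← hf₁] using tendsto_div_sub_half_atBot hvpos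
    refine tendsto_atBot_mono' _ ?_
      (tendsto_atBot_add_const_right _ ((1 - p) * f₀ 0) (hf₁_bot.const_mul_atBot hp0))
    filter_upwards [eventually_le_atBot 0] with k hk
    nlinarith [hmono₀.monotone hk]
  exact hcont.surjective htop hbot
end

section
/- For the SSVI total implied volatility v(k) = √((θ/2)(1 + ρφk + √((φk+ρ)² + 1 − ρ²))) with θ > 0, φ > 0, ρ ∈ (−1,1), the function g_{1/2}(z) := (1/2)(θρφz² + z√(θ²φ²z² + 4θ)) satisfies f_{1/2}(g_{1/2}(z)) = z for every z ∈ ℝ, where f_{1/2}(k) = k/v(k); i.e. g_{1/2} is the explicit inverse of the normalizing transformation for SSVI. -/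
theorem ssvi_g_one_half_inverse
    (θ φ ρ : ℝ) (hθ : 0 < θ) (hφ : 0 < φ) (hρ : ρ ∈ Set.Ioo (-1:ℝ) 1)
    (v : ℝ → ℝ)
    (hv : ∀ k, v k = Real.sqrt (θ / 2 * (1 + ρ * φ * k + Real.sqrt ((φ * k + ρ)^2 + 1 - ρ^2))))
    (g : ℝ → ℝ)
    (hg : ∀ z, g z = (1/2) * (θ * ρ * φ * z^2 + z * Real.sqrt (θ^2 * φ^2 * z^2 + 4 * θ))) :
    ∀ z, g z / v (g z) = z := by
  obtain ⟨hρ1, hρ2⟩ := hρ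
  intro z
  rcases eq_or_ne z 0 with hz | hz
  · subst hz
    have : g 0 = 0 := by rw [hg]; ring
    simp [this]
  · set s : ℝ := Real.sqrt (θ^2 * φ^2 * z^2 + 4 * θ) with hs_def
    have hsq_arg : (0:ℝ) ≤ θ^2 * φ^2 * z^2 + 4 * θ := by positivity
    have hs2 : s^2 = θ^2 * φ^2 * z^2 + 4 * θ := Real.sq_sqrt hsq_arg
    have hs0 : 0 < s := by
      rw [hs_def]
      apply Real.sqrt_pos.mpr
      positivity
    set k : ℝ := g z with hk_def
    have hk : k = (1/2) * (θ * ρ * φ * z^2 + z * s) := by rw [hk_def, hg]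
    -- s > |θ ρ φ z|, so θρφz + s > 0
    have hpos : 0 < θ * ρ * φ * z + s := by
      nlinarith [hs2, sq_nonneg (θ * ρ * φ * z + s), mul_pos hθ hθ,
        mul_pos (mul_pos hθ hθ) (mul_pos (mul_pos hφ hφ) (mul_pos (mul_self_pos.mpr hz) (show (0:ℝ) < 1 - ρ^2 by nlinarith))), sq_nonneg z]
    have hkz : k / z = (θ * ρ * φ * z + s) / 2 := by
      rw [hk]; field_simp
    have hkz_pos : 0 < k / z := by rw [hkz]; linarith
    -- inner sqrt equals E
    set E : ℝ := 1 + θ * φ^2 * z^2 / 2 + ρ * φ * z * s / 2 with hE_def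
    have hρsq : ρ^2 < 1 := by nlinarith
    have h4 : (2 + θ * φ^2 * z^2)^2 = φ^2 * z^2 * s^2 + 4 := by
      linear_combination (-(φ^2 * z^2)) * hs2
    have hA2 : (0:ℝ) < 2 + θ * φ^2 * z^2 := by positivity
    have hE_pos : 0 < E := by
      rw [hE_def]
      nlinarith [h4, sq_nonneg (φ * z * s + ρ * (2 + θ * φ^2 * z^2)), hρsq, hA2,
        mul_nonneg (sq_nonneg (φ * z * s)) (sub_nonneg.mpr hρsq.le)]
    have hDelta : (φ * k + ρ)^2 + 1 - ρ^2 = E^2 := by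
      rw [hk, hE_def]
      linear_combination ((1 - ρ^2) * φ^2 * z^2 / 4) * hs2
    have hsqrtE : Real.sqrt ((φ * k + ρ)^2 + 1 - ρ^2) = E := by
      rw [hDelta, Real.sqrt_sq hE_pos.le]
    -- v k = k / z
    have hinner : θ / 2 * (1 + ρ * φ * k + E) = (k / z)^2 := by
      rw [hkz, hk, hE_def]
      linear_combination (-(1:ℝ)/4) * hs2
    have hvk : v k = k / z := by
      rw [hv, hsqrtE, hinner, Real.sqrt_sq hkz_pos.le]
    rw [hvk]
    have hk0 : k ≠ 0 := by
      intro h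
      rw [h] at hkz_pos
      simp at hkz_pos
    field_simp
end

section
/- For the SSVI parameterisation with θ > 0, φ > 0, ρ ∈ (−1,1), the 1/2-normalized implied volatility v_{1/2}(z) := v(g_{1/2}(z)), where g_{1/2}(z) = (1/2)(θρφz² + z√(θ²φ²z² + 4θ)), is given explicitly by v_{1/2}(z) = (1/2)(θρφz + √(θ²φ²z² + 4θ)) for all z ∈ ℝ; in particular v_{1/2}(z) > 0 for all z. -/
theorem ssvi_normalized_vol_explicit
    (θ φ ρ : ℝ) (hθ : 0 < θ) (hφ : 0 < φ) (hρ : ρ ∈ Set.Ioo (-1:ℝ) 1)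
    (v : ℝ → ℝ)
    (hv : ∀ k, v k = Real.sqrt (θ / 2 * (1 + ρ * φ * k + Real.sqrt ((φ * k + ρ)^2 + 1 - ρ^2))))
    (g : ℝ → ℝ)
    (hg : ∀ z, g z = (1/2) * (θ * ρ * φ * z^2 + z * Real.sqrt (θ^2 * φ^2 * z^2 + 4 * θ))) :
    ∀ z, v (g z) = (1/2) * (θ * ρ * φ * z + Real.sqrt (θ^2 * φ^2 * z^2 + 4 * θ)) ∧
      0 < v (g z) := by
  intro z
  obtain ⟨hρ1, hρ2⟩ := hρ
  have hρsq : ρ^2 < 1 := by nlinarith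
  have harg : (0:ℝ) < θ^2 * φ^2 * z^2 + 4 * θ := by positivity
  set S := Real.sqrt (θ^2 * φ^2 * z^2 + 4 * θ) with hSdef
  have hS2 : S^2 = θ^2 * φ^2 * z^2 + 4 * θ := Real.sq_sqrt harg.le
  have hSpos : 0 < S := Real.sqrt_pos.mpr harg
  have habs : (θ * ρ * φ * z)^2 < S^2 := by nlinarith [sq_nonneg (θ*φ*z)]
  have hw : 0 < (1/2) * (θ * ρ * φ * z + S) := by nlinarith
  have hgz : g z = (1/2) * (θ * ρ * φ * z^2 + z * S) := by rw [hg]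
  have hEnn : (0:ℝ) ≤ (1/2)*(θ*φ^2*z^2 + ρ*φ*z*S) + 1 := by
    by_contra h
    push_neg at h
    have h1 : θ*φ^2*z^2 + 2 + ρ*φ*z*S < 0 := by linarith
    have ha : (0:ℝ) < θ*φ^2*z^2 + 2 := by positivity
    have hfz : (φ*z)^2 * S^2 = (φ*z)^2 * (θ^2*φ^2*z^2 + 4*θ) := by rw [hS2]
    nlinarith [mul_le_mul_of_nonneg_right hρsq.le (sq_nonneg (φ*z*S)),
      mul_pos ha (show (0:ℝ) < -(θ*φ^2*z^2 + 2 + ρ*φ*z*S) by linarith),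
      sq_nonneg (θ*φ^2*z^2 + 2 + ρ*φ*z*S), hfz]
  have key : v (g z) = (1/2) * (θ * ρ * φ * z + S) := by
    rw [hv]
    have hinner : Real.sqrt ((φ * g z + ρ)^2 + 1 - ρ^2)
        = (1/2)*(θ*φ^2*z^2 + ρ*φ*z*S) + 1 := by
      rw [show (φ * g z + ρ)^2 + 1 - ρ^2 = ((1/2)*(θ*φ^2*z^2 + ρ*φ*z*S) + 1)^2 from by
        rw [hgz]; linear_combination ((1 - ρ^2) * φ^2 * z^2 / 4) * hS2]
      exact Real.sqrt_sq hEnn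
    rw [hinner, hgz]
    rw [show θ / 2 * (1 + ρ * φ * ((1/2) * (θ * ρ * φ * z^2 + z * S)) +
        ((1/2)*(θ*φ^2*z^2 + ρ*φ*z*S) + 1)) = ((1/2) * (θ * ρ * φ * z + S))^2 from by
      linear_combination (-(1:ℝ)/4) * hS2]
    exact Real.sqrt_sq hw.le
  exact ⟨key, by rw [key]; exact hw⟩
end

section
/- Fix ρ ∈ (−1,1) and φ > 0. Define A_θ = (1+ρ²)/8 + 2/(θ²φ²) and I(θ) = ∫_ℝ exp(−A_θ y² − (ρ/4) y √(y² + θ)) dy/√(2π). Then I(θ) ~ 1/√(2A_θ) as θ → 0⁺, i.e. lim_{θ→0⁺} I(θ)·√(2A_θ) = 1. -/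
/-!
Substituting `y = x / √A_θ` turns `I(θ) √(2 A_θ)` into `π^{-1/2} ∫ exp (-x² - g_θ x)`, where
`g_θ x = (ρ/4) (x/√A_θ) √((x/√A_θ)² + θ)`. By AM–GM, `|g_θ x| ≤ (|ρ|/4) (A_θ⁻¹ + θ) (x² + 1)`, and the
coefficient tends to `0` because `A_θ → ∞`; so dominated convergence (against a Gaussian of half
the width) gives `∫ exp (-x² - g_θ x) → ∫ exp (-x²) = √π`.
-/

open MeasureTheory Filter Real Set Topology

theorem abs_mul_sqrt_sq_add_le (y : ℝ) {θ : ℝ} (hθ : 0 ≤ θ) :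
    |y * √(y ^ 2 + θ)| ≤ y ^ 2 + θ / 2 := by
  have hs : √(y ^ 2 + θ) ^ 2 = y ^ 2 + θ := sq_sqrt (by positivity)
  rw [abs_mul, abs_of_nonneg (sqrt_nonneg _)]
  nlinarith [two_mul_le_add_sq |y| √(y ^ 2 + θ), sq_abs y]

theorem abs_mul_div_sqrt_mul_sqrt_le (c : ℝ) {a θ : ℝ} (ha : 0 < a) (hθ : 0 ≤ θ) (x : ℝ) :
    |c * (x / √a) * √((x / √a) ^ 2 + θ)| ≤ |c| * (a⁻¹ + θ) * (x ^ 2 + 1) := by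
  have hx : (x / √a) ^ 2 = a⁻¹ * x ^ 2 := by
    rw [div_pow, sq_sqrt ha.le]; ring
  have h := abs_mul_sqrt_sq_add_le (x / √a) hθ
  rw [hx] at h
  rw [hx, mul_assoc, abs_mul, mul_assoc]
  refine mul_le_mul_of_nonneg_left (h.trans ?_) (abs_nonneg c)
  nlinarith [inv_pos.2 ha, sq_nonneg x]

theorem integral_exp_neg_mul_sq_sub_eq {a : ℝ} (ha : 0 < a) (f : ℝ → ℝ) :
    ∫ y, exp (-a * y ^ 2 - f y) = (√a)⁻¹ * ∫ x, exp (-x ^ 2 - f (x / √a)) := by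
  have hsa : 0 < √a := sqrt_pos.2 ha
  have hcv := Measure.integral_comp_div (fun y => exp (-a * y ^ 2 - f y)) √a
  rw [abs_of_pos hsa, smul_eq_mul] at hcv
  have hsq : ∀ x : ℝ, -a * (x / √a) ^ 2 = -x ^ 2 := fun x => by
    rw [div_pow, sq_sqrt ha.le]; field_simp
  simp only [hsq] at hcv
  rw [hcv, inv_mul_cancel_left₀ hsa.ne']

theorem tendsto_integral_exp_neg_sq_sub {ι : Type*} {l : Filter ι} [l.IsCountablyGenerated]
    {g : ι → ℝ → ℝ} {c : ι → ℝ} (hg : ∀ i, AEStronglyMeasurable (g i))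
    (hc : Tendsto c l (𝓝 0)) (hgc : ∀ᶠ i in l, ∀ x, |g i x| ≤ c i * (x ^ 2 + 1)) :
    Tendsto (fun i => ∫ x, exp (-x ^ 2 - g i x)) l (𝓝 √π) := by
  have hgauss : ∫ x : ℝ, exp (-x ^ 2) = √π := by simpa using integral_gaussian 1
  rw [← hgauss]
  refine tendsto_integral_filter_of_dominated_convergence
    (fun x => exp (1 / 2) * exp (-(1 / 2) * x ^ 2)) ?_ ?_ ?_ ?_
  · exact Eventually.of_forall fun i => by have := hg i; fun_prop
  · filter_upwards [hgc, hc.eventually (ge_mem_nhds one_half_pos)] with i hi hci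
    refine ae_of_all _ fun x => ?_
    rw [norm_of_nonneg (exp_pos _).le, ← exp_add]
    refine exp_le_exp.2 ?_
    nlinarith [neg_abs_le (g i x), hi x, sq_nonneg x]
  · exact (integrable_exp_neg_mul_sq one_half_pos).const_mul _
  · refine ae_of_all _ fun x => ?_
    have hg0 : Tendsto (fun i => g i x) l (𝓝 0) := by
      refine squeeze_zero_norm' (hgc.mono fun i hi => hi x) ?_
      simpa using hc.mul_const (x ^ 2 + 1)
    simpa using (tendsto_const_nhds (x := -x ^ 2).sub hg0).rexp

theorem tendsto_inv_add_two_div_sq_mul_sq {b φ : ℝ} (hb : 0 < b) (hφ : φ ≠ 0) :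
    Tendsto (fun θ => (b + 2 / (θ ^ 2 * φ ^ 2))⁻¹) (𝓝[≠] 0) (𝓝 0) := by
  have hlim : Tendsto (fun θ : ℝ => θ ^ 2 * φ ^ 2 / 2) (𝓝[≠] 0) (𝓝 0) := by
    simpa using ((by fun_prop : Continuous fun θ : ℝ => θ ^ 2 * φ ^ 2 / 2).tendsto 0).mono_left
      nhdsWithin_le_nhds
  refine squeeze_zero' (Eventually.of_forall fun θ => by positivity) ?_ hlim
  filter_upwards [self_mem_nhdsWithin] with θ hθ
  have hθφ : 0 < θ ^ 2 * φ ^ 2 := mul_pos (sq_pos_of_ne_zero hθ) (sq_pos_of_ne_zero hφ)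
  calc (b + 2 / (θ ^ 2 * φ ^ 2))⁻¹ ≤ (2 / (θ ^ 2 * φ ^ 2))⁻¹ :=
        inv_anti₀ (div_pos two_pos hθφ) (le_add_of_nonneg_left hb.le)
    _ = θ ^ 2 * φ ^ 2 / 2 := inv_div _ _

theorem laplace_asymptotics_I_general
    (ρ φ : ℝ) (hφ : 0 < φ)
    (A : ℝ → ℝ) (hA : ∀ θ, A θ = (1 + ρ^2) / 8 + 2 / (θ^2 * φ^2))
    (I : ℝ → ℝ)
    (hI : ∀ θ, I θ = ∫ y : ℝ,
        Real.exp (-(A θ) * y^2 - (ρ / 4) * y * Real.sqrt (y^2 + θ)) / Real.sqrt (2 * Real.pi)) :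
    Filter.Tendsto (fun θ => I θ * Real.sqrt (2 * A θ))
      (nhdsWithin 0 (Set.Ioi 0)) (nhds 1) := by
  have hA_pos : ∀ θ, 0 < A θ := fun θ => by rw [hA]; positivity
  have hA_inv : Tendsto (fun θ => (A θ)⁻¹) (𝓝[>] 0) (𝓝 0) := by
    simp only [hA]
    exact (tendsto_inv_add_two_div_sq_mul_sq (by positivity) hφ.ne').mono_left
      (nhdsWithin_mono _ fun θ hθ => ne_of_gt hθ)
  set g : ℝ → ℝ → ℝ := fun θ x => ρ / 4 * (x / √(A θ)) * √((x / √(A θ)) ^ 2 + θ)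
  have hg_bound : ∀ᶠ θ in 𝓝[>] 0, ∀ x, |g θ x| ≤ |ρ| / 4 * ((A θ)⁻¹ + θ) * (x ^ 2 + 1) := by
    filter_upwards [self_mem_nhdsWithin] with θ hθ x
    have h := abs_mul_div_sqrt_mul_sqrt_le (ρ / 4) (hA_pos θ) hθ.le x
    rwa [abs_div, abs_of_pos (four_pos : (0 : ℝ) < 4)] at h
  have hc : Tendsto (fun θ => |ρ| / 4 * ((A θ)⁻¹ + θ)) (𝓝[>] 0) (𝓝 0) := by
    simpa using (hA_inv.add (tendsto_nhdsWithin_of_tendsto_nhds tendsto_id)).const_mul (|ρ| / 4)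
  have hlim := tendsto_integral_exp_neg_sq_sub
    (fun θ => (by fun_prop : Continuous (g θ)).aestronglyMeasurable) hc hg_bound
  have hI_eq : ∀ θ, I θ * √(2 * A θ) = (√π)⁻¹ * ∫ x, exp (-x ^ 2 - g θ x) := by
    intro θ
    rw [hI, integral_div,
      integral_exp_neg_mul_sq_sub_eq (hA_pos θ) fun y => ρ / 4 * y * √(y ^ 2 + θ)]
    change (√(A θ))⁻¹ * (∫ x, exp (-x ^ 2 - g θ x)) / √(2 * π) * √(2 * A θ) = _
    have hsA : √(A θ) ≠ 0 := (sqrt_pos.2 (hA_pos θ)).ne'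
    rw [sqrt_mul two_pos.le, sqrt_mul two_pos.le]
    field_simp
  simp only [hI_eq]
  simpa [inv_mul_cancel₀ (sqrt_pos.2 pi_pos).ne'] using hlim.const_mul (√π)⁻¹

theorem laplace_asymptotics_I
    (ρ φ : ℝ) (hρ : ρ ∈ Set.Ioo (-1:ℝ) 1) (hφ : 0 < φ)
    (A : ℝ → ℝ) (hA : ∀ θ, A θ = (1 + ρ^2) / 8 + 2 / (θ^2 * φ^2))
    (I : ℝ → ℝ)
    (hI : ∀ θ, I θ = ∫ y : ℝ,
        Real.exp (-(A θ) * y^2 - (ρ / 4) * y * Real.sqrt (y^2 + θ)) / Real.sqrt (2 * Real.pi)) :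
    Filter.Tendsto (fun θ => I θ * Real.sqrt (2 * A θ))
      (nhdsWithin 0 (Set.Ioi 0)) (nhds 1) :=
  laplace_asymptotics_I_general ρ φ hφ A hA I hI
end
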